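/- arXiv:2111.00507 — 2 statements merged into one kernel-verified Lean document; each statement's English description precedes it below -/
import Mathlib

section
/- Let I ⊆ J be two independence relations on an alphabet Σ, M = M(Σ,I), N = M(Σ,J), and π : M → N the canonical surjective monoid morphism. For any fixed trace ω ∈ M, the restriction of π to the set {x ∈ M : x ≤ ω} of left divisors of ω is injective. -/
namespace TraceDoc

/-- The elementary commutation relation on the free monoid induced by an
independence relation `I`. -/
def traceRel {S : Type*} (I : S → S → Prop) : FreeMonoid S → FreeMonoid S → Prop :=
  fun u v => ∃ a b, I a b ∧ u = FreeMonoid.of a * FreeMonoid.of b ∧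
    v = FreeMonoid.of b * FreeMonoid.of a

/-- The congruence on the free monoid generated by the commutations of `I`. -/
def traceCon {S : Type*} (I : S → S → Prop) : Con (FreeMonoid S) := conGen (traceRel I)

/-- The trace monoid `M(Σ, I)`. -/
abbrev TraceMonoid {S : Type*} (I : S → S → Prop) := (traceCon I).Quotient

/-- Canonical projection from words to traces. -/
def tproj {S : Type*} (I : S → S → Prop) : FreeMonoid S →* TraceMonoid I := (traceCon I).mk'

/-- Image of a letter in the trace monoid. -/
def temb {S : Type*} (I : S → S → Prop) (a : S) : TraceMonoid I := tproj I (FreeMonoid.of a)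

/-- Any monoid hom to a commutative monoid factors through the trace congruence. -/
lemma traceCon_le_ker {S N : Type*} [CommMonoid N] (I : S → S → Prop)
    (f : FreeMonoid S →* N) : traceCon I ≤ Con.ker f := by
  apply Con.conGen_le.2
  rintro u v ⟨a, b, _, rfl, rfl⟩
  simp [Con.ker_rel, map_mul, mul_comm]

/-- Length of a trace (well defined since commutations preserve length). -/
def tlen {S : Type*} (I : S → S → Prop) : TraceMonoid I → ℕ := fun x =>
  Multiplicative.toAdd
    (Con.lift _ (FreeMonoid.lift fun _ : S => Multiplicative.ofAdd (1 : ℕ))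
      (traceCon_le_ker I _) x)

/-- Number of occurrences of the letter `a` in a trace (well defined). -/
def tcount {S : Type*} [DecidableEq S] (I : S → S → Prop) (a : S) : TraceMonoid I → ℕ := fun x =>
  Multiplicative.toAdd
    (Con.lift _ (FreeMonoid.lift fun b : S =>
        Multiplicative.ofAdd (if b = a then (1 : ℕ) else 0))
      (traceCon_le_ker I _) x)

/-- Left divisibility in a trace monoid. -/
def tle {S : Type*} (I : S → S → Prop) (x y : TraceMonoid I) : Prop := ∃ z, y = x * z

/-- A clique: a finite set of pairwise independent letters. -/
def IsClique {S : Type*} (I : S → S → Prop) (s : Finset S) : Prop := (↑s : Set S).Pairwise I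

/-- The type of cliques of the trace monoid. -/
abbrev Clique {S : Type*} (I : S → S → Prop) := {s : Finset S // IsClique I s}

lemma temb_commute {S : Type*} {I : S → S → Prop} {a b : S} (h : I a b) :
    Commute (temb I a) (temb I b) := by
  have : (traceCon I) (FreeMonoid.of a * FreeMonoid.of b) (FreeMonoid.of b * FreeMonoid.of a) :=
    ConGen.Rel.of _ _ ⟨a, b, h, rfl, rfl⟩
  simpa [Commute, SemiconjBy, temb, tproj, ← map_mul] using (traceCon I).eq.2 this

/-- The product of a clique in the trace monoid. -/
def cprod {S : Type*} (I : S → S → Prop) (c : Clique I) : TraceMonoid I :=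
  c.1.noncommProd (temb I) (fun a ha b hb hab => temb_commute (c.2 ha hb hab))

/-- The Cartier–Foata normality relation `c → d` between cliques. -/
def NormalPair {S : Type*} (I : S → S → Prop) (c d : Clique I) : Prop :=
  ∀ b ∈ d.1, ∃ a ∈ c.1, ¬ I a b

/-- A concurrent system: a right action of the trace monoid on the states
`X` together with a sink `⊥` (modelled by `none`). -/
structure ConcurrentSystem {S : Type*} (I : S → S → Prop) (X : Type*) where
  act : Option X → TraceMonoid I → Option X
  act_one : ∀ α, act α 1 = α
  act_mul : ∀ α x y, act α (x * y) = act (act α x) y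
  act_bot : ∀ x, act none x = none

/-- The set `M_α` of executions from state `α`. -/
def ConcurrentSystem.execs {S : Type*} {I : S → S → Prop} {X : Type*}
    (C : ConcurrentSystem I X) (α : X) : Set (TraceMonoid I) :=
  {x | C.act (some α) x ≠ none}

end TraceDoc


namespace TraceDoc


variable {S : Type*} {I : S → S → Prop}

/-- Congruence on words (lists). -/
def LCon (I : S → S → Prop) (l₁ l₂ : List S) : Prop :=
  traceCon I (FreeMonoid.ofList l₁) (FreeMonoid.ofList l₂)

lemma lcon_refl (l : List S) : LCon I l l := (traceCon I).refl _

lemma lcon_symm {l₁ l₂ : List S} (h : LCon I l₁ l₂) : LCon I l₂ l₁ := (traceCon I).symm h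

lemma lcon_trans {l₁ l₂ l₃ : List S} (h : LCon I l₁ l₂) (h' : LCon I l₂ l₃) : LCon I l₁ l₃ :=
  (traceCon I).trans h h'

lemma lcon_append {l₁ l₂ r₁ r₂ : List S} (h : LCon I l₁ l₂) (h' : LCon I r₁ r₂) :
    LCon I (l₁ ++ r₁) (l₂ ++ r₂) := by
  unfold LCon at *
  rw [FreeMonoid.ofList_append, FreeMonoid.ofList_append]
  exact (traceCon I).mul h h'

lemma lcon_cons (a : S) {l₁ l₂ : List S} (h : LCon I l₁ l₂) : LCon I (a :: l₁) (a :: l₂) :=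
  lcon_append (l₁ := [a]) (lcon_refl _) h

lemma lcon_swap {a b : S} (h : I a b) (l : List S) : LCon I (a :: b :: l) (b :: a :: l) := by
  have h1 : traceCon I (FreeMonoid.of a * FreeMonoid.of b) (FreeMonoid.of b * FreeMonoid.of a) :=
    ConGen.Rel.of _ _ ⟨a, b, h, rfl, rfl⟩
  have := (traceCon I).mul h1 ((traceCon I).refl (FreeMonoid.ofList l))
  simpa [LCon, FreeMonoid.ofList_cons, mul_assoc] using this

lemma lcon_pull (hsym : Symmetric I) (a : S) :
    ∀ (l r : List S), (∀ b ∈ l, I a b) → LCon I (l ++ a :: r) (a :: (l ++ r))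
  | [], r, _ => lcon_refl _
  | b :: l, r, h => by
    have hb : I a b := h b (by simp)
    have ih := lcon_pull hsym a l r (fun c hc => h c (by simp [hc]))
    have step := lcon_cons b ih
    exact lcon_trans step (lcon_swap (hsym hb) (l ++ r))

end TraceDoc

namespace TraceDoc

variable {S : Type*} {I : S → S → Prop}

/-- Filtering a word by a predicate, as a monoid hom on the free monoid. -/
def filterHom (p : S → Prop) [DecidablePred p] : FreeMonoid S →* FreeMonoid S where
  toFun u := FreeMonoid.ofList ((FreeMonoid.toList u).filter (fun c => decide (p c)))
  map_one' := rfl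
  map_mul' u v := by
    simp [FreeMonoid.toList_mul, List.filter_append, FreeMonoid.ofList_append]

lemma lcon_filter (p : S → Prop) [DecidablePred p]
    (hp : ∀ c d, I c d → ¬ (p c ∧ p d)) {l₁ l₂ : List S} (h : LCon I l₁ l₂) :
    l₁.filter (fun c => decide (p c)) = l₂.filter (fun c => decide (p c)) := by
  have hle : traceCon I ≤ Con.ker (filterHom p) := by
    apply Con.conGen_le.2
    rintro u v ⟨a, b, hab, rfl, rfl⟩
    have hnot := hp a b hab
    simp only [Con.ker_rel]
    show FreeMonoid.ofList ((FreeMonoid.toList (FreeMonoid.of a * FreeMonoid.of b)).filter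
        (fun c => decide (p c)))
      = FreeMonoid.ofList ((FreeMonoid.toList (FreeMonoid.of b * FreeMonoid.of a)).filter
        (fun c => decide (p c)))
    have e1 : FreeMonoid.toList (FreeMonoid.of a * FreeMonoid.of b) = [a, b] := rfl
    have e2 : FreeMonoid.toList (FreeMonoid.of b * FreeMonoid.of a) = [b, a] := rfl
    rw [e1, e2]
    by_cases ha : p a <;> by_cases hb : p b <;>
      simp [List.filter_cons, ha, hb] at hnot ⊢
  have := hle h
  simp only [Con.ker_rel] at this
  have h2 : FreeMonoid.ofList (l₁.filter (fun c => decide (p c)))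
      = FreeMonoid.ofList (l₂.filter (fun c => decide (p c))) := this
  exact congrArg FreeMonoid.toList h2

lemma pair_indep (hsym : Symmetric I) (hirr : ∀ a, ¬ I a a) {c d : S} (hcd : ¬ I c d) :
    ∀ c' d', I c' d' → ¬ ((c' = c ∨ c' = d) ∧ (d' = c ∨ d' = d)) := by
  rintro c' d' h ⟨(rfl | rfl), (rfl | rfl)⟩
  · exact hirr _ h
  · exact hcd h
  · exact hcd (hsym h)
  · exact hirr _ h

end TraceDoc

namespace TraceDoc

variable {S : Type*} {I : S → S → Prop}

lemma tcount_ofList [DecidableEq S] (a : S) (l : List S) :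
    tcount I a (tproj I (FreeMonoid.ofList l)) = l.count a := by
  unfold tcount tproj
  rw [Con.lift_mk']
  induction l with
  | nil => simp
  | cons b l ih =>
    rw [FreeMonoid.ofList_cons, map_mul, FreeMonoid.lift_eval_of]
    simp only [toAdd_mul, toAdd_ofAdd, List.count_cons]
    rw [← ih]
    by_cases h : b = a <;> simp [h]
    · omega

lemma exists_split_first [DecidableEq S] {a : S} :
    ∀ {v : List S}, a ∈ v → ∃ v₁ v₂, v = v₁ ++ a :: v₂ ∧ a ∉ v₁ := by
  intro v hv
  induction v with
  | nil => simp at hv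
  | cons c v ih =>
    by_cases hc : c = a
    · exact ⟨[], v, by simp [hc], by simp⟩
    · have hmem : a ∈ v := by
        rcases List.mem_cons.1 hv with h | h
        · exact absurd h.symm hc
        · exact h
      obtain ⟨v₁, v₂, h1, h2⟩ := ih hmem
      refine ⟨c :: v₁, v₂, by simp [h1], ?_⟩
      simp only [List.mem_cons, not_or]
      exact ⟨fun h => hc h.symm, h2⟩

lemma countP_pair [DecidableEq S] {a b : S} (hab : a ≠ b) :
    ∀ l : List S, (l.filter (fun c => decide (c = a ∨ c = b))).length = l.count a + l.count b := by
  intro l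
  induction l with
  | nil => simp
  | cons c l ih =>
    simp only [List.filter_cons, List.count_cons]
    by_cases hca : c = a
    · subst hca
      rw [if_pos (by simp), List.length_cons, ih]
      simp [hab]
      omega
    · by_cases hcb : c = b
      · subst hcb
        rw [if_pos (by simp), List.length_cons, ih]
        simp [hca]
        omega
      · rw [if_neg (by simp [hca, hcb]), ih]
        simp [hca, hcb]

end TraceDoc

namespace TraceDoc

variable {S : Type*} {I : S → S → Prop}

lemma lcon_of_filters [DecidableEq S] (hsym : Symmetric I) (hirr : ∀ a, ¬ I a a) :
    ∀ (n : ℕ) (u v : List S), u.length = n →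
      (∀ a b, ¬ I a b →
        u.filter (fun c => decide (c = a ∨ c = b)) = v.filter (fun c => decide (c = a ∨ c = b))) →
      LCon I u v := by
  intro n
  induction n with
  | zero =>
    intro u v hlen hf
    have hu : u = [] := List.length_eq_zero_iff.1 hlen
    subst hu
    cases v with
    | nil => exact lcon_refl _
    | cons c v' =>
      have h1 := hf c c (hirr c)
      rw [List.filter_cons, if_pos (by simp)] at h1
      simp at h1
  | succ n ih =>
    intro u v hlen hf
    cases u with
    | nil => simp at hlen
    | cons a u₀ =>
      have hmem : a ∈ v := by
        have h1 := hf a a (hirr a)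
        have h2 : a ∈ v.filter (fun c => decide (c = a ∨ c = a)) := by
          rw [← h1, List.filter_cons, if_pos (by simp)]
          exact List.mem_cons_self
        exact List.mem_of_mem_filter h2
      obtain ⟨v₁, v₂, rfl, hnv₁⟩ := exists_split_first hmem
      have hstep : ∀ b ∈ v₁, I a b := by
        intro b hb
        by_contra hnab
        have hba : b ≠ a := fun h => hnv₁ (h ▸ hb)
        have hfab := hf a b hnab
        rw [List.filter_cons, if_pos (by simp), List.filter_append, List.filter_cons,
          if_pos (by simp)] at hfab
        have hbmem : b ∈ v₁.filter (fun c => decide (c = a ∨ c = b)) :=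
          List.mem_filter.2 ⟨hb, by simp⟩
        cases hfil : v₁.filter (fun c => decide (c = a ∨ c = b)) with
        | nil => rw [hfil] at hbmem; simp at hbmem
        | cons e t =>
          have he : e ∈ v₁.filter (fun c => decide (c = a ∨ c = b)) := by
            rw [hfil]; exact List.mem_cons_self
          have he' : e = b := by
            have h1 := List.mem_filter.1 he
            have h2 : e = a ∨ e = b := by simpa using h1.2
            rcases h2 with h2 | h2
            · exact absurd (h2 ▸ h1.1) hnv₁
            · exact h2
          rw [hfil, List.cons_append] at hfab
          injection hfab with hae _
          exact hba (he' ▸ hae.symm)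
      have hpull := lcon_pull hsym a v₁ v₂ hstep
      have hfil₀ : ∀ c d, ¬ I c d →
          u₀.filter (fun x => decide (x = c ∨ x = d))
            = (v₁ ++ v₂).filter (fun x => decide (x = c ∨ x = d)) := by
        intro c d hcd
        have h1 := hf c d hcd
        have h2 := lcon_filter (p := fun x => x = c ∨ x = d) (pair_indep hsym hirr hcd) hpull
        have h3 : (a :: u₀).filter (fun x => decide (x = c ∨ x = d))
            = (a :: (v₁ ++ v₂)).filter (fun x => decide (x = c ∨ x = d)) := h1.trans h2
        rw [List.filter_cons, List.filter_cons] at h3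
        by_cases hpa : (a = c ∨ a = d)
        · rw [if_pos (by simpa using hpa), if_pos (by simpa using hpa)] at h3
          exact (List.cons_eq_cons.mp h3).2
        · rw [if_neg (by simpa using hpa), if_neg (by simpa using hpa)] at h3
          exact h3
      have hlen₀ : u₀.length = n := by simpa using hlen
      have ih₀ := ih u₀ (v₁ ++ v₂) hlen₀ hfil₀
      exact lcon_trans (lcon_cons a ih₀) (lcon_symm hpull)

lemma lcon_cancel [DecidableEq S] (hsym : Symmetric I) (hirr : ∀ a, ¬ I a a) {a : S}
    {u v : List S} (h : LCon I (a :: u) (a :: v)) : LCon I u v := by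
  apply lcon_of_filters hsym hirr u.length u v rfl
  intro c d hcd
  have h1 := lcon_filter (p := fun x => x = c ∨ x = d) (pair_indep hsym hirr hcd) h
  rw [List.filter_cons, List.filter_cons] at h1
  by_cases hpa : (a = c ∨ a = d)
  · rw [if_pos (by simpa using hpa), if_pos (by simpa using hpa)] at h1
    exact (List.cons_eq_cons.mp h1).2
  · rw [if_neg (by simpa using hpa), if_neg (by simpa using hpa)] at h1
    exact h1

end TraceDoc

namespace TraceDoc

variable {S : Type*} {I : S → S → Prop}

lemma divisor_eq [DecidableEq S] (hsym : Symmetric I) (hirr : ∀ a, ¬ I a a) :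
    ∀ (n : ℕ) (u v zu zv : List S), u.length = n → (∀ c, u.count c = v.count c) →
      LCon I (u ++ zu) (v ++ zv) → LCon I u v := by
  intro n
  induction n with
  | zero =>
    intro u v zu zv hlen hcount _
    have hu : u = [] := List.length_eq_zero_iff.1 hlen
    subst hu
    cases v with
    | nil => exact lcon_refl _
    | cons c v' =>
      have h1 := hcount c
      simp [List.count_cons] at h1
  | succ n ih =>
    intro u v zu zv hlen hcount hω
    cases u with
    | nil => simp at hlen
    | cons a u₀ =>
      have hmem : a ∈ v := by
        have h1 := hcount a
        have h2 : 0 < v.count a := by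
          rw [← h1]
          simp [List.count_cons]
        exact List.count_pos_iff.1 h2
      obtain ⟨v₁, v₂, rfl, hnv₁⟩ := exists_split_first hmem
      have hstep : ∀ b ∈ v₁, I a b := by
        intro b hb
        by_contra hnab
        have hba : b ≠ a := fun h => hnv₁ (h ▸ hb)
        have hab : a ≠ b := fun h => hba h.symm
        have hfw := lcon_filter (p := fun x => x = a ∨ x = b) (pair_indep hsym hirr hnab) hω
        rw [List.filter_append, List.filter_append] at hfw
        have hlenf : ((a :: u₀).filter (fun x => decide (x = a ∨ x = b))).length
            = ((v₁ ++ a :: v₂).filter (fun x => decide (x = a ∨ x = b))).length := by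
          rw [countP_pair hab, countP_pair hab, hcount a, hcount b]
        have hfe := (List.append_inj hfw hlenf).1
        rw [List.filter_cons, if_pos (by simp), List.filter_append, List.filter_cons,
          if_pos (by simp)] at hfe
        have hbmem : b ∈ v₁.filter (fun c => decide (c = a ∨ c = b)) :=
          List.mem_filter.2 ⟨hb, by simp⟩
        cases hfil : v₁.filter (fun c => decide (c = a ∨ c = b)) with
        | nil => rw [hfil] at hbmem; simp at hbmem
        | cons e t =>
          have he : e ∈ v₁.filter (fun c => decide (c = a ∨ c = b)) := by
            rw [hfil]; exact List.mem_cons_self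
          have he' : e = b := by
            have h1 := List.mem_filter.1 he
            have h2 : e = a ∨ e = b := by simpa using h1.2
            rcases h2 with h2 | h2
            · exact absurd (h2 ▸ h1.1) hnv₁
            · exact h2
          rw [hfil, List.cons_append] at hfe
          have := (List.cons_eq_cons.mp hfe).1
          exact hba (he' ▸ this.symm)
      have hpull := lcon_pull hsym a v₁ v₂ hstep
      have hω' : LCon I (a :: (u₀ ++ zu)) (a :: ((v₁ ++ v₂) ++ zv)) := by
        have h1 : LCon I ((v₁ ++ a :: v₂) ++ zv) ((a :: (v₁ ++ v₂)) ++ zv) :=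
          lcon_append hpull (lcon_refl zv)
        have h2 := lcon_trans hω h1
        simpa using h2
      have hcan := lcon_cancel hsym hirr hω'
      have hcount₀ : ∀ c, u₀.count c = (v₁ ++ v₂).count c := by
        intro c
        have h1 := hcount c
        simp [List.count_cons, List.count_append] at h1 ⊢
        omega
      have ih₀ := ih u₀ (v₁ ++ v₂) zu zv (by simpa using hlen) hcount₀ hcan
      exact lcon_trans (lcon_cons a ih₀) (lcon_symm hpull)

end TraceDoc

namespace TraceDoc

variable {S : Type*} {I : S → S → Prop}

lemma tcount_one [DecidableEq S] (c : S) : tcount I c (1 : TraceMonoid I) = 0 := by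
  have h := tcount_ofList (I := I) c []
  simpa using h

lemma tcount_mul [DecidableEq S] (c : S) (x y : TraceMonoid I) :
    tcount I c (x * y) = tcount I c x + tcount I c y := by
  simp [tcount, map_mul, toAdd_mul]

lemma tcount_temb [DecidableEq S] (c a : S) :
    tcount I c (temb I a) = List.count c [a] :=
  tcount_ofList (I := I) c [a]

lemma tcount_pi [DecidableEq S] {J : S → S → Prop} (π : TraceMonoid I →* TraceMonoid J)
    (hπ : ∀ a : S, π (temb I a) = temb J a) (c : S) (x : TraceMonoid I) :
    tcount J c (π x) = tcount I c x := by
  obtain ⟨u, rfl⟩ := Con.mk'_surjective (c := traceCon I) x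
  have key : ∀ l : List S, tcount J c (π ((traceCon I).mk' (FreeMonoid.ofList l)))
      = tcount I c ((traceCon I).mk' (FreeMonoid.ofList l)) := by
    intro l
    induction l with
    | nil =>
      have h0 : (traceCon I).mk' (FreeMonoid.ofList []) = 1 := map_one _
      rw [h0, map_one, tcount_one, tcount_one]
    | cons a l ih =>
      have h1 : (traceCon I).mk' (FreeMonoid.ofList (a :: l))
          = temb I a * (traceCon I).mk' (FreeMonoid.ofList l) := by
        rw [FreeMonoid.ofList_cons, map_mul]; rfl
      rw [h1, map_mul, hπ, tcount_mul, tcount_mul, ih, tcount_temb, tcount_temb]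
  have h := key (FreeMonoid.toList u)
  rwa [FreeMonoid.ofList_toList] at h

end TraceDoc


open TraceDoc in
/-- For `I ⊆ J`, the canonical projection `M(Σ,I) → M(Σ,J)` is injective on
the set of left divisors of any fixed trace `ω`. -/
theorem stmt7 {S : Type*} [Fintype S] (I J : S → S → Prop)
    (hsymI : Symmetric I) (hirrI : ∀ a, ¬ I a a)
    (hsymJ : Symmetric J) (hirrJ : ∀ a, ¬ J a a)
    (hIJ : ∀ a b, I a b → J a b)
    (π : TraceMonoid I →* TraceMonoid J)
    (hπ : ∀ a : S, π (temb I a) = temb J a)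
    (ω : TraceMonoid I) :
    Set.InjOn π {x : TraceMonoid I | tle I x ω} := by
  classical
  intro x hx y hy hxy
  obtain ⟨z, hz⟩ := hx
  obtain ⟨w, hw⟩ := hy
  obtain ⟨u, hu⟩ := Con.mk'_surjective (c := traceCon I) x
  obtain ⟨v, hv⟩ := Con.mk'_surjective (c := traceCon I) y
  obtain ⟨zu, hzu⟩ := Con.mk'_surjective (c := traceCon I) z
  obtain ⟨zv, hzv⟩ := Con.mk'_surjective (c := traceCon I) w
  -- letter counts of x and y agree
  have hcount : ∀ c, (FreeMonoid.toList u).count c = (FreeMonoid.toList v).count c := by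
    intro c
    have h1 : tcount I c x = tcount I c y := by
      rw [← tcount_pi π hπ c x, ← tcount_pi π hπ c y, hxy]
    have h2 : tcount I c (tproj I (FreeMonoid.ofList (FreeMonoid.toList u)))
        = tcount I c (tproj I (FreeMonoid.ofList (FreeMonoid.toList v))) := by
      rw [FreeMonoid.ofList_toList, FreeMonoid.ofList_toList]
      show tcount I c ((traceCon I).mk' u) = tcount I c ((traceCon I).mk' v)
      rw [hu, hv]; exact h1
    rwa [tcount_ofList, tcount_ofList] at h2
  -- u ++ zu and v ++ zv both represent ω
  have hω : LCon I (FreeMonoid.toList u ++ FreeMonoid.toList zu)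
      (FreeMonoid.toList v ++ FreeMonoid.toList zv) := by
    show traceCon I (FreeMonoid.ofList _) (FreeMonoid.ofList _)
    rw [FreeMonoid.ofList_append, FreeMonoid.ofList_append, FreeMonoid.ofList_toList,
      FreeMonoid.ofList_toList, FreeMonoid.ofList_toList, FreeMonoid.ofList_toList]
    have hmul : (traceCon I).mk' (u * zu) = (traceCon I).mk' (v * zv) := by
      rw [map_mul, map_mul, hu, hv, hzu, hzv, ← hz, ← hw]
    exact Quotient.exact' hmul
  have hkey := divisor_eq hsymI hirrI (FreeMonoid.toList u).length
    (FreeMonoid.toList u) (FreeMonoid.toList v) (FreeMonoid.toList zu) (FreeMonoid.toList zv)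
    rfl hcount hω
  have : traceCon I u v := by
    have := hkey
    unfold LCon at this
    rwa [FreeMonoid.ofList_toList, FreeMonoid.ofList_toList] at this
  rw [← hu, ← hv]
  exact Quotient.sound' this
end

section
/- Conversely, if in a non-trivial concurrent system with Σ_α ≠ ∅ for all α the dominant valuation is probabilistic, then for each state α the poset 𝒞_α has a unique maximal element, hence is a lattice; thus the system is deterministic. -/
section Aux17
open TraceDoc
open scoped Classical
variable {S : Type*} {I : S → S → Prop}

lemma tlen_one17 : tlen I 1 = 0 := by simp [tlen]

lemma tlen_mul17 (x y : TraceMonoid I) : tlen I (x * y) = tlen I x + tlen I y := by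
  simp [tlen, map_mul, toAdd_mul]

lemma tlen_temb17 (a : S) : tlen I (temb I a) = 1 := by
  simp [tlen, temb, tproj]

lemma tlen_eq_zero17 {x : TraceMonoid I} (hx : tlen I x = 0) : x = 1 := by
  obtain ⟨w, rfl⟩ := Con.mk'_surjective (c := traceCon I) x
  induction w using FreeMonoid.recOn with
  | one => rfl
  | of_mul a w _ =>
    exfalso
    rw [show ((traceCon I).mk' (FreeMonoid.of a * w) : TraceMonoid I)
        = temb I a * (traceCon I).mk' w from map_mul _ _ _] at hx
    rw [tlen_mul17, tlen_temb17] at hx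
    omega

lemma trace_cases17 (x : TraceMonoid I) : x = 1 ∨ ∃ a y, x = temb I a * y := by
  obtain ⟨w, rfl⟩ := Con.mk'_surjective (c := traceCon I) x
  induction w using FreeMonoid.recOn with
  | one => exact Or.inl rfl
  | of_mul a w _ =>
    exact Or.inr ⟨a, (traceCon I).mk' w, map_mul _ _ _⟩

lemma tle_refl17 (x : TraceMonoid I) : tle I x x := ⟨1, (mul_one x).symm⟩

lemma tle_trans17 {x y z : TraceMonoid I} (h1 : tle I x y) (h2 : tle I y z) : tle I x z := by
  obtain ⟨u, rfl⟩ := h1; obtain ⟨v, rfl⟩ := h2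
  exact ⟨u * v, mul_assoc _ _ _⟩

lemma tle_mul_left17 (a : TraceMonoid I) {x y : TraceMonoid I} (h : tle I x y) :
    tle I (a * x) (a * y) := by
  obtain ⟨u, rfl⟩ := h; exact ⟨u, (mul_assoc _ _ _).symm⟩

lemma isClique_mono17 {s t : Finset S} (hst : s ⊆ t) (ht : IsClique I t) : IsClique I s :=
  Set.Pairwise.mono (by exact_mod_cast hst) ht

/-- cliques: empty, singleton, pair products -/
lemma cprod_empty17 (hc : IsClique I (∅ : Finset S)) : cprod I ⟨∅, hc⟩ = 1 :=
  Finset.noncommProd_empty _ _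

lemma cprod_singleton17 (a : S) (hc : IsClique I ({a} : Finset S)) :
    cprod I ⟨{a}, hc⟩ = temb I a :=
  Finset.noncommProd_singleton _ _

lemma cprod_subset17 {c d : Clique I} (hdc : d.1 ⊆ c.1) :
    ∃ e : TraceMonoid I, cprod I c = cprod I d * e := by
  classical
  refine ⟨(c.1 \ d.1).noncommProd (temb I)
    (fun a ha b hb hab => temb_commute (c.2 (Finset.mem_sdiff.1 ha).1 (Finset.mem_sdiff.1 hb).1 hab)), ?_⟩
  have hu : c.1 = d.1 ∪ (c.1 \ d.1) := (Finset.union_sdiff_of_subset hdc).symm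
  have hdisj : Disjoint d.1 (c.1 \ d.1) := Finset.disjoint_sdiff
  have hcl : IsClique I (d.1 ∪ (c.1 \ d.1)) := by rw [← hu]; exact c.2
  unfold cprod
  rw [Finset.noncommProd_congr hu (fun x _ => rfl)
    (fun a ha b hb hab => temb_commute (c.2 ha hb hab))]
  exact Finset.noncommProd_union_of_disjoint hdisj _ _

lemma cprod_pair17 {a b : S} (hne : a ≠ b) (hc : IsClique I ({a, b} : Finset S)) :
    cprod I ⟨{a, b}, hc⟩ = temb I a * temb I b := by
  classical
  have hc' : (↑({a, b} : Finset S) : Set S).Pairwise (Function.onFun Commute (temb I)) :=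
    fun x hx y hy hxy => temb_commute (hc hx hy hxy)
  show Finset.noncommProd (insert a {b}) (temb I) hc' = _
  rw [Finset.noncommProd_insert_of_notMem _ _ _ _ (by simp [hne])]
  rw [Finset.noncommProd_singleton]

section Sys
variable {X : Type*} {C : ConcurrentSystem I X}

lemma execs_prefix17 {α : X} {x y : TraceMonoid I} (hxy : x * y ∈ C.execs α) :
    x ∈ C.execs α := by
  intro hx
  apply hxy
  rw [ConcurrentSystem.execs, Set.mem_setOf_eq] at *
  rw [C.act_mul, hx, C.act_bot]

lemma execs_step17 {α : X} {x : TraceMonoid I} (hx : x ∈ C.execs α) :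
    ∃ β : X, C.act (some α) x = some β ∧
      (∀ y : TraceMonoid I, (x * y ∈ C.execs α ↔ y ∈ C.execs β)) := by
  rcases hβ : C.act (some α) x with _ | β
  · exact absurd hβ hx
  · refine ⟨β, rfl, fun y => ?_⟩
    simp only [ConcurrentSystem.execs, Set.mem_setOf_eq, C.act_mul, hβ]

lemma enabled_mono17 {α : X} {c d : Clique I} (hdc : d.1 ⊆ c.1)
    (hc : cprod I c ∈ C.execs α) : cprod I d ∈ C.execs α := by
  obtain ⟨e, he⟩ := cprod_subset17 hdc
  rw [he] at hc
  exact execs_prefix17 hc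

end Sys

lemma inner_sum17 [Fintype S] (c' : Clique I) :
    ∑ c ∈ Finset.univ.filter (fun c : Clique I => c.1 ⊆ c'.1),
      (-1:ℤ) ^ (c'.1.card - c.1.card) = if c'.1 = ∅ then 1 else 0 := by
  classical
  have hbij : ∑ c ∈ Finset.univ.filter (fun c : Clique I => c.1 ⊆ c'.1),
      (-1:ℤ) ^ (c'.1.card - c.1.card)
      = ∑ s ∈ c'.1.powerset, (-1:ℤ) ^ (c'.1.card - s.card) := by
    refine Finset.sum_bij' (fun c _ => c.1)
      (fun s hs => ⟨s, isClique_mono17 (Finset.mem_powerset.1 hs) c'.2⟩) ?_ ?_ ?_ ?_ ?_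
    · intro c hc; exact Finset.mem_powerset.2 (Finset.mem_filter.1 hc).2
    · intro s hs
      simp only [Finset.mem_filter, Finset.mem_univ, true_and]
      exact Finset.mem_powerset.1 hs
    · intro c hc; rfl
    · intro s hs; rfl
    · intro c hc; rfl
  rw [hbij]
  have hpow : ∀ s ∈ c'.1.powerset, (-1:ℤ) ^ (c'.1.card - s.card)
      = (-1:ℤ) ^ c'.1.card * (-1:ℤ) ^ s.card := by
    intro s hs
    have hle := Finset.card_le_card (Finset.mem_powerset.1 hs)
    have h2 : c'.1.card + s.card = (c'.1.card - s.card) + 2 * s.card := by omega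
    rw [← pow_add, h2, pow_add, pow_mul]
    simp
  rw [Finset.sum_congr rfl hpow, ← Finset.mul_sum, Finset.sum_powerset_neg_one_pow_card]
  split_ifs with hccc
  · simp [hccc]
  · simp

lemma key_sum17 [Fintype S] (P : Clique I → Prop)
    (hPe : P ⟨∅, by simp [IsClique]⟩) :
    ∑ c : Clique I, ∑ c' ∈ Finset.univ.filter (fun c' : Clique I => P c' ∧ c.1 ⊆ c'.1),
      (-1:ℤ) ^ (c'.1.card - c.1.card) = 1 := by
  classical
  have step1 : ∀ c : Clique I,
      ∑ c' ∈ Finset.univ.filter (fun c' : Clique I => P c' ∧ c.1 ⊆ c'.1),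
        (-1:ℤ) ^ (c'.1.card - c.1.card)
      = ∑ c' ∈ Finset.univ.filter P,
          (if c.1 ⊆ c'.1 then (-1:ℤ) ^ (c'.1.card - c.1.card) else 0) := by
    intro c
    rw [Finset.sum_filter, Finset.sum_filter]
    simp only [ite_and]
  rw [Finset.sum_congr rfl (fun c _ => step1 c), Finset.sum_comm]
  have step2 : ∀ c' : Clique I,
      ∑ c : Clique I, (if c.1 ⊆ c'.1 then (-1:ℤ) ^ (c'.1.card - c.1.card) else 0)
      = if c'.1 = ∅ then 1 else 0 := by
    intro c'
    rw [← inner_sum17 c', Finset.sum_filter]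
  rw [Finset.sum_congr rfl (fun c' _ => step2 c')]
  have step3 : ∀ c' : Clique I, (if c'.1 = ∅ then (1:ℤ) else 0)
      = if c' = (⟨∅, by simp [IsClique]⟩ : Clique I) then 1 else 0 := by
    intro c'
    congr 1
    simp [Subtype.ext_iff]
  rw [Finset.sum_congr rfl (fun c' _ => step3 c'), Finset.sum_ite_eq']
  simp [hPe]


end Aux17


open scoped Classical in
open TraceDoc in
/-- Conversely: in a non-trivial concurrent system with all `Σ_α` nonempty,
if the dominant valuation is probabilistic then each poset of enabled cliques
has a unique maximal element, hence is a lattice, and the system is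
deterministic. -/
theorem stmt17 {S X : Type*} [Fintype S] [Fintype X]
    (I : S → S → Prop) (hsym : Symmetric I) (hirr : ∀ a, ¬ I a a)
    (C : ConcurrentSystem I X)
    (hnontriv : ∃ (α : X) (a : S), temb I a ∈ C.execs α)
    (hne : ∀ α : X, ∃ a : S, temb I a ∈ C.execs α)
    (h : X → Clique I → ℤ)
    (hh : ∀ (α : X) (c : Clique I),
      h α c = ∑ c' ∈ Finset.univ.filter
          (fun c' : Clique I => cprod I c' ∈ C.execs α ∧ c.1 ⊆ c'.1),
        (-1 : ℤ) ^ (c'.1.card - c.1.card))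
    (hprob : ∀ α : X, h α ⟨∅, by simp [IsClique]⟩ = 0 ∧
      ∀ c : Clique I, cprod I c ∈ C.execs α → c.1.Nonempty → 0 ≤ h α c) :
    (∀ α : X, ∃! c : Clique I, cprod I c ∈ C.execs α ∧
      ∀ d : Clique I, cprod I d ∈ C.execs α → c.1 ⊆ d.1 → d = c) ∧
    (∀ (α : X) (x y : TraceMonoid I), x ∈ C.execs α → y ∈ C.execs α →
      ∃ z ∈ C.execs α, tle I x z ∧ tle I y z) := by
  classical
  have hEmptyEnabled : ∀ α : X, cprod I (⟨∅, by simp [IsClique]⟩ : Clique I) ∈ C.execs α := by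
    intro α
    have h1 : (1 : TraceMonoid I) ∈ C.execs α := by
      simp [ConcurrentSystem.execs, C.act_one]
    convert h1 using 1
    exact cprod_empty17 _
  -- value of h at a maximal clique is 1
  have hval : ∀ (α : X) (c : Clique I), cprod I c ∈ C.execs α →
      (∀ d : Clique I, cprod I d ∈ C.execs α → c.1 ⊆ d.1 → d = c) → h α c = 1 := by
    intro α c hc hmax
    rw [hh]
    have hfil : Finset.univ.filter
        (fun c' : Clique I => cprod I c' ∈ C.execs α ∧ c.1 ⊆ c'.1) = {c} := by
      ext c'
      simp only [Finset.mem_filter, Finset.mem_univ, true_and, Finset.mem_singleton]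
      constructor
      · rintro ⟨h1, h2⟩; exact hmax c' h1 h2
      · rintro rfl; exact ⟨hc, subset_rfl⟩
    rw [hfil]
    simp
  -- nonnegativity everywhere
  have hnonneg : ∀ (α : X) (d : Clique I), 0 ≤ h α d := by
    intro α d
    by_cases hd : cprod I d ∈ C.execs α
    · rcases Finset.eq_empty_or_nonempty d.1 with he | hne'
      · have hde : d = (⟨∅, by simp [IsClique]⟩ : Clique I) := Subtype.ext he
        rw [hde, (hprob α).1]
      · exact (hprob α).2 d hd hne'
    · rw [hh]
      have hfil : Finset.univ.filter
          (fun c' : Clique I => cprod I c' ∈ C.execs α ∧ d.1 ⊆ c'.1) = ∅ := by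
        ext c'
        simp only [Finset.mem_filter, Finset.mem_univ, true_and, Finset.notMem_empty,
          iff_false, not_and]
        intro h1 h2
        exact hd (enabled_mono17 h2 h1)
      rw [hfil]
      simp
  -- total mass is one
  have hsum : ∀ α : X, ∑ c : Clique I, h α c = 1 := by
    intro α
    rw [Finset.sum_congr rfl (fun c _ => hh α c)]
    exact key_sum17 (fun c' => cprod I c' ∈ C.execs α) (hEmptyEnabled α)
  -- uniqueness of maximal cliques
  have huniq : ∀ (α : X) (c₁ c₂ : Clique I),
      (cprod I c₁ ∈ C.execs α ∧ ∀ d : Clique I, cprod I d ∈ C.execs α → c₁.1 ⊆ d.1 → d = c₁) →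
      (cprod I c₂ ∈ C.execs α ∧ ∀ d : Clique I, cprod I d ∈ C.execs α → c₂.1 ⊆ d.1 → d = c₂) →
      c₁ = c₂ := by
    intro α c₁ c₂ h1 h2
    by_contra hne12
    have hv1 : h α c₁ = 1 := hval α c₁ h1.1 h1.2
    have hv2 : h α c₂ = 1 := hval α c₂ h2.1 h2.2
    have h2le : (2 : ℤ) ≤ ∑ c : Clique I, h α c := by
      have hpair : ∑ c ∈ ({c₁, c₂} : Finset (Clique I)), h α c = 2 := by
        rw [Finset.sum_pair hne12, hv1, hv2]; norm_num
      calc (2 : ℤ) = ∑ c ∈ ({c₁, c₂} : Finset (Clique I)), h α c := hpair.symm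
        _ ≤ ∑ c : Clique I, h α c :=
          Finset.sum_le_sum_of_subset_of_nonneg (Finset.subset_univ _)
            (fun i _ _ => hnonneg α i)
    rw [hsum α] at h2le
    norm_num at h2le
  -- existence of a maximal clique above any enabled clique
  have hmaxabove : ∀ (α : X) (d : Clique I), cprod I d ∈ C.execs α →
      ∃ c : Clique I, cprod I c ∈ C.execs α ∧ d.1 ⊆ c.1 ∧
        ∀ e : Clique I, cprod I e ∈ C.execs α → c.1 ⊆ e.1 → e = c := by
    intro α d hd
    set E := Finset.univ.filter
      (fun e : Clique I => cprod I e ∈ C.execs α ∧ d.1 ⊆ e.1) with hE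
    have hdE : d ∈ E := by
      simp only [hE, Finset.mem_filter, Finset.mem_univ, true_and]
      exact ⟨hd, subset_rfl⟩
    obtain ⟨c, hcE, hcmax⟩ := Finset.exists_max_image E (fun e => e.1.card) ⟨d, hdE⟩
    simp only [hE, Finset.mem_filter, Finset.mem_univ, true_and] at hcE
    refine ⟨c, hcE.1, hcE.2, ?_⟩
    intro e he hce
    have heE : e ∈ E := by
      simp only [hE, Finset.mem_filter, Finset.mem_univ, true_and]
      exact ⟨he, hcE.2.trans hce⟩
    exact Subtype.ext (Finset.eq_of_subset_of_card_le hce (hcmax e heE)).symm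
  -- greatest element
  have hgreatest : ∀ α : X, ∃ c : Clique I, cprod I c ∈ C.execs α ∧
      (∀ d : Clique I, cprod I d ∈ C.execs α → c.1 ⊆ d.1 → d = c) ∧
      (∀ d : Clique I, cprod I d ∈ C.execs α → d.1 ⊆ c.1) := by
    intro α
    obtain ⟨c, hc, -, hcmax⟩ := hmaxabove α ⟨∅, by simp [IsClique]⟩ (hEmptyEnabled α)
    refine ⟨c, hc, hcmax, ?_⟩
    intro d hd
    obtain ⟨c', hc', hdc', hc'max⟩ := hmaxabove α d hd
    have hcc : c' = c := huniq α c' c ⟨hc', hc'max⟩ ⟨hc, hcmax⟩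
    rw [← hcc]
    exact hdc'
  -- joint enabling of two distinct enabled letters
  have hletters : ∀ (α : X) (a b : S), a ≠ b → temb I a ∈ C.execs α →
      temb I b ∈ C.execs α → I a b ∧ temb I a * temb I b ∈ C.execs α := by
    intro α a b hab ha hb
    obtain ⟨c, hc, -, hcgr⟩ := hgreatest α
    have hsa : IsClique I ({a} : Finset S) := by simp [IsClique]
    have hsb : IsClique I ({b} : Finset S) := by simp [IsClique]
    have hac : a ∈ c.1 := by
      have := hcgr ⟨{a}, hsa⟩ (by rw [cprod_singleton17]; exact ha)
      exact this (Finset.mem_singleton_self a)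
    have hbc : b ∈ c.1 := by
      have := hcgr ⟨{b}, hsb⟩ (by rw [cprod_singleton17]; exact hb)
      exact this (Finset.mem_singleton_self b)
    have hIab : I a b := c.2 (by exact_mod_cast hac) (by exact_mod_cast hbc) hab
    have hpairclique : IsClique I ({a, b} : Finset S) := by
      rw [IsClique, Finset.coe_insert, Finset.coe_singleton]
      exact Set.pairwise_pair.2 (fun _ => ⟨hIab, hsym hIab⟩)
    have hsub : ({a, b} : Finset S) ⊆ c.1 := by
      intro x hx
      rcases Finset.mem_insert.1 hx with rfl | hx
      · exact hac
      · rw [Finset.mem_singleton.1 hx]; exact hbc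
    have hpe : cprod I ⟨{a, b}, hpairclique⟩ ∈ C.execs α := enabled_mono17 hsub hc
    rw [cprod_pair17 hab] at hpe
    exact ⟨hIab, hpe⟩
  -- the main induction for directedness
  have main2 : ∀ n : ℕ, ∀ α : X, ∀ x y : TraceMonoid I, x ∈ C.execs α → y ∈ C.execs α →
      tlen I x + tlen I y ≤ n →
      ∃ z ∈ C.execs α, tle I x z ∧ tle I y z ∧ tlen I z ≤ tlen I x + tlen I y := by
    intro n
    induction n with
    | zero =>
      intro α x y hx hy hlen
      have hx0 : tlen I x = 0 := by omega
      rw [tlen_eq_zero17 hx0]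
      exact ⟨y, hy, ⟨y, (one_mul y).symm⟩, tle_refl17 y, by simp [tlen_one17]⟩
    | succ n IH =>
      intro α x y hx hy hlen
      rcases trace_cases17 x with rfl | ⟨a, x', rfl⟩
      · exact ⟨y, hy, ⟨y, (one_mul y).symm⟩, tle_refl17 y, by simp [tlen_one17]⟩
      rcases trace_cases17 y with rfl | ⟨b, y', rfl⟩
      · exact ⟨temb I a * x', hx, tle_refl17 _, ⟨temb I a * x', (one_mul _).symm⟩,
          by simp [tlen_one17]⟩
      have hta : temb I a ∈ C.execs α := execs_prefix17 hx
      have htb : temb I b ∈ C.execs α := execs_prefix17 hy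
      obtain ⟨β, hβ, hβiff⟩ := execs_step17 hta
      obtain ⟨γ, hγ, hγiff⟩ := execs_step17 htb
      have hx' : x' ∈ C.execs β := (hβiff x').1 hx
      have hy' : y' ∈ C.execs γ := (hγiff y').1 hy
      by_cases hab : a = b
      · subst hab
        have hβγ : β = γ := by
          rw [hβ] at hγ
          exact Option.some.inj hγ
        subst hβγ
        have hlen' : tlen I x' + tlen I y' ≤ n := by
          rw [tlen_mul17, tlen_mul17, tlen_temb17] at hlen
          omega
        obtain ⟨z', hz', hxz', hyz', hlz'⟩ := IH β x' y' hx' hy' hlen'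
        refine ⟨temb I a * z', (hβiff z').2 hz', tle_mul_left17 _ hxz',
          tle_mul_left17 _ hyz', ?_⟩
        rw [tlen_mul17, tlen_mul17, tlen_mul17, tlen_temb17]
        omega
      · obtain ⟨hIab, hab2⟩ := hletters α a b hab hta htb
        have htbβ : temb I b ∈ C.execs β := (hβiff (temb I b)).1 hab2
        have hlen1 : tlen I x' + tlen I (temb I b) ≤ n := by
          rw [tlen_temb17]
          rw [tlen_mul17, tlen_mul17, tlen_temb17, tlen_temb17] at hlen
          omega
        obtain ⟨w, hw, hxw, hbw, hlw⟩ := IH β x' (temb I b) hx' htbβ hlen1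
        obtain ⟨w', rfl⟩ := hbw
        have hcomm : temb I a * (temb I b * w') = temb I b * (temb I a * w') := by
          rw [← mul_assoc, ← mul_assoc, (temb_commute hIab).eq]
        have hbaw' : temb I b * (temb I a * w') ∈ C.execs α := by
          rw [← hcomm]
          exact (hβiff _).2 hw
        have haw'γ : temb I a * w' ∈ C.execs γ := (hγiff _).1 hbaw'
        have hlen2 : tlen I (temb I a * w') + tlen I y' ≤ n := by
          simp only [tlen_mul17, tlen_temb17] at hlw hlen ⊢
          omega
        obtain ⟨u, hu, hawu, hyu, hlu⟩ := IH γ (temb I a * w') y' haw'γ hy' hlen2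
        refine ⟨temb I b * u, (hγiff u).2 hu, ?_, tle_mul_left17 _ hyu, ?_⟩
        · have h1 : tle I (temb I a * x') (temb I a * (temb I b * w')) :=
            tle_mul_left17 _ hxw
          rw [hcomm] at h1
          exact tle_trans17 h1 (tle_mul_left17 _ hawu)
        · simp only [tlen_mul17, tlen_temb17] at hlu hlw ⊢
          omega
  constructor
  · intro α
    obtain ⟨c, hc, hcmax, -⟩ := hgreatest α
    refine ⟨c, ⟨hc, hcmax⟩, ?_⟩
    rintro c'' ⟨h1, h2⟩
    exact huniq α c'' c ⟨h1, h2⟩ ⟨hc, hcmax⟩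
  · intro α x y hx hy
    obtain ⟨z, hz, h1, h2, -⟩ := main2 (tlen I x + tlen I y) α x y hx hy le_rfl
    exact ⟨z, hz, h1, h2⟩
end
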